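/- arXiv:1510.01049 — 2 statements merged into one kernel-verified Lean document; each statement's English description precedes it below -/
import Mathlib

section
/- Let G be a group, H a subgroup of G, and n ∈ ℕ. Suppose ((a_{l,i})_{l∈ℕ,0≤i<n}, (b_l)_{l∈ℕ}) is an H-witness sequence of width n in G. Then: (rows) for every l ∈ ℕ the n left cosets a_{l,0}·C_G(b_l), …, a_{l,n−1}·C_G(b_l) are pairwise disjoint; and (columns) for every m ∈ ℕ and every function f : {0,…,m} → {0,…,n−1}, the intersection ⋂_{l=0}^{m} a_{l,f(l)}·C_G(b_l) is nonempty (indeed it contains the product a_{m,f(m)} a_{m−1,f(m−1)} ⋯ a_{0,f(0)}). -/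
open scoped Pointwise

/-- The center of a subgroup `H` of `G`, viewed as a subgroup of `G`:
`Z(H) = H ⊓ C_G(H)`. -/
def subgroupCenter {G : Type*} [Group G] (H : Subgroup G) : Subgroup G :=
  H ⊓ Subgroup.centralizer (H : Set G)

/-- `E_l`: the subgroup of `G` generated by `H ∪ {a_{k,j}, b_k : k < l, j < n}`. -/
def witnessEnv {G : Type*} [Group G] (H : Subgroup G) {n : ℕ}
    (a : ℕ → Fin n → G) (b : ℕ → G) (l : ℕ) : Subgroup G :=
  Subgroup.closure ((H : Set G) ∪ {x | ∃ k < l, (∃ j : Fin n, x = a k j) ∨ x = b k})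

/-- `(a, b)` is an `H`-witness sequence of width `n` in `G`. -/
def IsHWitnessSeq {G : Type*} [Group G] (H : Subgroup G) (n : ℕ)
    (a : ℕ → Fin n → G) (b : ℕ → G) : Prop :=
  ∀ l : ℕ,
    (∀ i : Fin n, ∀ g ∈ witnessEnv H a b l,
        subgroupCenter H ≤ Subgroup.centralizer {g} →
        a l i ∈ Subgroup.centralizer {g}) ∧
    (∀ g ∈ witnessEnv H a b l,
        H ≤ Subgroup.centralizer {g} → b l ∈ Subgroup.centralizer {g}) ∧
    (∀ i j : Fin n, i < j → (a l i)⁻¹ * a l j ∉ Subgroup.centralizer {b l})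

/-!
Both halves come from commutation relations forced by the witness axioms: `a_{k,j}`
centralizes `b_l` whenever `k ≠ l` (for `k < l` by (ii), since `a_{k,j}` centralizes `H`;
for `k > l` by (i), since `b_l` centralizes `Z(H)`), and `a_{k,j}` commutes with `a_{l,i}`
for `l < k` by (i). Hence in `a_{l,f(l)}⁻¹ · a_{m,f(m)} ⋯ a_{0,f(0)}` the factor `a_{l,f(l)}⁻¹`
can be moved past the later factors to cancel, leaving a product of elements of
`C_G(b_l)`. Disjointness of the rows is (iii): two left cosets of `C_G(b_l)` meet only if
they coincide.
-/

section Group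

variable {G : Type*} [Group G]

open Subgroup

theorem Subgroup.le_centralizer_singleton_iff {K : Subgroup G} {g : G} :
    K ≤ centralizer {g} ↔ g ∈ centralizer (K : Set G) :=
  ⟨fun h _ hk => (h hk g rfl).symm, fun h k hk _ hg => hg ▸ (h k hk).symm⟩

theorem Subgroup.mem_centralizer_singleton_comm {g k : G} :
    k ∈ centralizer {g} ↔ g ∈ centralizer {k} := by
  simp only [mem_centralizer_singleton_iff, eq_comm]

theorem Subgroup.disjoint_leftCoset_of_inv_mul_notMem (S : Subgroup G) {x y : G}
    (h : x⁻¹ * y ∉ S) : Disjoint (x • (S : Set G)) (y • S) := by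
  refine Set.disjoint_left.mpr fun z hx hy => h ?_
  rw [mem_leftCoset_iff] at hx hy
  simpa [mul_assoc] using mul_mem hx (inv_mem hy)

theorem List.prod_map_reverse_range_succ (c : ℕ → G) (m : ℕ) :
    ((List.range (m + 1)).reverse.map c).prod = c m * ((List.range m).reverse.map c).prod := by
  simp [List.range_succ]

theorem List.prod_map_reverse_range_mem_leftCoset {S : Subgroup G} {c : ℕ → G} {l m : ℕ}
    (hlm : l ≤ m) (hS : ∀ k ≠ l, c k ∈ S) (hcomm : ∀ k, l < k → Commute (c l) (c k)) :
    ((List.range (m + 1)).reverse.map c).prod ∈ c l • (S : Set G) := by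
  induction m, hlm using Nat.le_induction with
  | base =>
    rw [mem_leftCoset_iff, List.prod_map_reverse_range_succ, inv_mul_cancel_left]
    refine list_prod_mem fun x hx => ?_
    obtain ⟨k, hk, rfl⟩ := List.mem_map.mp hx
    exact hS k (List.mem_range.mp (List.mem_reverse.mp hk)).ne
  | succ m hlm ih =>
    rw [mem_leftCoset_iff] at ih ⊢
    rw [List.prod_map_reverse_range_succ, ← mul_assoc,
      ((hcomm (m + 1) (Nat.lt_succ_of_le hlm)).inv_left).eq, mul_assoc]
    exact mul_mem (hS _ (by omega)) ih

theorem subgroupCenter_le_centralizer_of_mem {H : Subgroup G} {h : G} (hh : h ∈ H) :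
    subgroupCenter H ≤ centralizer {h} :=
  fun _ hz => mem_centralizer_singleton_iff.mpr (hz.2 h hh).symm

end Group

section WitnessSeq

variable {G : Type*} [Group G] {H : Subgroup G} {n : ℕ} {a : ℕ → Fin n → G} {b : ℕ → G}

open Subgroup

theorem mem_witnessEnv_of_mem (l : ℕ) {h : G} (hh : h ∈ H) : h ∈ witnessEnv H a b l :=
  subset_closure (Or.inl hh)

theorem a_mem_witnessEnv {k l : ℕ} (hkl : k < l) (j : Fin n) : a k j ∈ witnessEnv H a b l :=
  subset_closure (Or.inr ⟨k, hkl, Or.inl ⟨j, rfl⟩⟩)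

theorem b_mem_witnessEnv {k l : ℕ} (hkl : k < l) : b k ∈ witnessEnv H a b l :=
  subset_closure (Or.inr ⟨k, hkl, Or.inr rfl⟩)

namespace IsHWitnessSeq

theorem le_centralizer_a (hw : IsHWitnessSeq H n a b) (l : ℕ) (i : Fin n) :
    H ≤ centralizer {a l i} :=
  fun h hh => mem_centralizer_singleton_comm.mp <|
    (hw l).1 i h (mem_witnessEnv_of_mem l hh) (subgroupCenter_le_centralizer_of_mem hh)

theorem subgroupCenter_le_centralizer_b (hw : IsHWitnessSeq H n a b) (l : ℕ) :
    subgroupCenter H ≤ centralizer {b l} :=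
  fun z hz => mem_centralizer_singleton_comm.mp <|
    (hw l).2.1 z (mem_witnessEnv_of_mem l hz.1) (le_centralizer_singleton_iff.mpr hz.2)

theorem commute_a (hw : IsHWitnessSeq H n a b) {k l : ℕ} (hlk : l < k) (i j : Fin n) :
    Commute (a l i) (a k j) :=
  mem_centralizer_singleton_iff.mp <| mem_centralizer_singleton_comm.mp <|
    (hw k).1 j (a l i) (a_mem_witnessEnv hlk i) fun _ hz => hw.le_centralizer_a l i hz.1

theorem a_mem_centralizer_b (hw : IsHWitnessSeq H n a b) {k l : ℕ} (hkl : k ≠ l) (j : Fin n) :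
    a k j ∈ centralizer {b l} := by
  rcases hkl.lt_or_gt with hkl | hlk
  · exact mem_centralizer_singleton_comm.mp <|
      (hw l).2.1 (a k j) (a_mem_witnessEnv hkl j) (hw.le_centralizer_a k j)
  · exact (hw k).1 j (b l) (b_mem_witnessEnv hlk) (hw.subgroupCenter_le_centralizer_b l)

theorem inv_mul_a_notMem_centralizer_b (hw : IsHWitnessSeq H n a b) (l : ℕ) {i j : Fin n}
    (hij : i ≠ j) : (a l i)⁻¹ * a l j ∉ centralizer {b l} := by
  rcases hij.lt_or_gt with hij | hji
  · exact (hw l).2.2 i j hij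
  · exact fun h => (hw l).2.2 j i hji (by simpa using inv_mem h)

end IsHWitnessSeq

end WitnessSeq

theorem witness_seq_tp2_pattern {G : Type*} [Group G] (H : Subgroup G) (n : ℕ)
    (a : ℕ → Fin n → G) (b : ℕ → G) (hw : IsHWitnessSeq H n a b) :
    -- rows: the cosets a_{l,0} C_G(b_l), …, a_{l,n-1} C_G(b_l) are pairwise disjoint
    (∀ l : ℕ, ∀ i j : Fin n, i ≠ j →
      Disjoint (a l i • (Subgroup.centralizer {b l} : Set G))
               (a l j • (Subgroup.centralizer {b l} : Set G))) ∧
    -- columns: every finite "path" intersection is nonempty; indeed it contains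
    -- the product a_{m, f m} * a_{m-1, f (m-1)} * ⋯ * a_{0, f 0}
    (∀ m : ℕ, ∀ f : ℕ → Fin n,
      (∃ x : G, ∀ l ≤ m, x ∈ a l (f l) • (Subgroup.centralizer {b l} : Set G)) ∧
      (∀ l ≤ m,
        (((List.range (m + 1)).reverse.map (fun k => a k (f k))).prod ∈
          a l (f l) • (Subgroup.centralizer {b l} : Set G)))) := by
  refine ⟨fun l i j hij => Subgroup.disjoint_leftCoset_of_inv_mul_notMem _
    (hw.inv_mul_a_notMem_centralizer_b l hij), fun m f => ?_⟩
  have path_mem : ∀ l ≤ m, ((List.range (m + 1)).reverse.map (fun k => a k (f k))).prod ∈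
      a l (f l) • (Subgroup.centralizer {b l} : Set G) := fun l hlm =>
    List.prod_map_reverse_range_mem_leftCoset hlm
      (fun k hkl => hw.a_mem_centralizer_b hkl (f k)) (fun k hlk => hw.commute_a hlk _ _)
  exact ⟨⟨_, path_mem⟩, path_mem⟩
end

section
/- Let G be a group and H a subgroup of G. Suppose that G has no TP₂-pattern for cosets of centralizers and that G is H-centralizer-saturated. Then there exist a natural number m and finite subsets F₁ ⊆ {g ∈ G : Z(H) ⊆ C_G(g)} and F₂ ⊆ {g ∈ G : H ⊆ C_G(g)} such that, setting K := ⋂_{g∈F₂} C_G(g) and A := K ∩ ⋂_{g∈F₁} C_G(g): (a) H ⊆ K; (b) Z(H) ⊆ A ⊆ K; and (c) for every k ∈ K the set {a⁻¹ k a : a ∈ A} has at most m elements. Moreover, if H is normal in G, then the subgroups A' := ⋂_{x∈G} x⁻¹Ax and K' := ⋂_{x∈G} x⁻¹Kx are normal in G and still satisfy: H ⊆ K', Z(H) ⊆ A' ⊆ K', and for every k ∈ K' the set {a⁻¹ k a : a ∈ A'} has at most m elements. -/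
open scoped Pointwise

/-- `G` admits a TP₂-pattern for cosets of centralizers, of width `n`. -/
def HasCosetTP2Pattern (G : Type*) [Group G] (n : ℕ) : Prop :=
  ∃ (a : ℕ → Fin n → G) (b : ℕ → G),
    (∀ l : ℕ, ∀ i j : Fin n, i ≠ j →
      Disjoint (a l i • (Subgroup.centralizer {b l} : Set G))
               (a l j • (Subgroup.centralizer {b l} : Set G))) ∧
    (∀ m : ℕ, ∀ f : ℕ → Fin n, ∃ x : G, ∀ l ≤ m,
      x ∈ a l (f l) • (Subgroup.centralizer {b l} : Set G))

/-- `G` has no TP₂-pattern for cosets of centralizers. -/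
def NoCosetTP2Pattern (G : Type*) [Group G] : Prop :=
  ∃ n : ℕ, ¬ HasCosetTP2Pattern G n

/-- The condition on `a₀, …, aₙ, b` relative to a parameter set `F`:
each `aᵢ` centralizes every `g ∈ F` with `Z(H) ⊆ C_G(g)`, `b` centralizes every
`g ∈ F` with `H ⊆ C_G(g)`, and the `aᵢ` lie in pairwise distinct cosets of `C_G(b)`. -/
def WitnessTriple {G : Type*} [Group G] (H : Subgroup G) (n : ℕ)
    (F : Set G) (a : Fin (n + 1) → G) (b : G) : Prop :=
  (∀ i : Fin (n + 1), ∀ g ∈ F,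
      subgroupCenter H ≤ Subgroup.centralizer {g} → a i ∈ Subgroup.centralizer {g}) ∧
  (∀ g ∈ F, H ≤ Subgroup.centralizer {g} → b ∈ Subgroup.centralizer {g}) ∧
  (∀ i j : Fin (n + 1), i < j → (a i)⁻¹ * a j ∉ Subgroup.centralizer {b})

/-- `G` is `H`-centralizer-saturated: for every `n` and every `S ⊆ G` of size at most
`max(|H|, ℵ₀)`, if the witness condition is realized over every finite subset of `S`,
then it is realized over `S` itself. -/
def CentralizerSaturated (G : Type*) [Group G] (H : Subgroup G) : Prop :=
  ∀ (n : ℕ) (S : Set G), Cardinal.mk S ≤ max (Cardinal.mk H) Cardinal.aleph0 →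
    (∀ F : Finset G, ↑F ⊆ S → ∃ (a : Fin (n + 1) → G) (b : G), WitnessTriple H n ↑F a b) →
    ∃ (a : Fin (n + 1) → G) (b : G), WitnessTriple H n S a b

/-!
Let `n + 1` be a width admitting no TP₂-pattern. Suppose that witnesses `a₀, …, aₙ, b` existed
over every finite set. Saturation then provides witnesses over `H ∪ T` for every finite `T`, so
rows can be chosen one after another, each over `H` together with the entries of all earlier rows.
Every entry commutes with `H` (the `aᵢ`) or with `Z(H)` (the `b`), hence entries of different rows
commute, and commuting rows whose entries lie in distinct cosets of `C_G(b_l)` form a TP₂-pattern: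
a column is realised by the product of its entries. So some finite `F` carries no witnesses. If
`n + 1` distinct conjugates `d⁻¹ k d` with `d ∈ A` and `k ∈ K` existed, then `aᵢ := dᵢ⁻¹` and
`b := k` would be witnesses over `F`. The normal versions `K'` and `A'` are the normal cores.
-/

open Subgroup

theorem Set.finite_and_ncard_le_of_forall_not_injective {α : Type*} {s : Set α} {n : ℕ}
    (h : ∀ c : Fin (n + 1) → α, (∀ i, c i ∈ s) → ¬ Function.Injective c) :
    s.Finite ∧ s.ncard ≤ n := by
  rw [← Set.encard_le_coe_iff_finite_ncard_le]
  by_contra! hlt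
  obtain ⟨c, -⟩ := Fin.Embedding.exists_embedding_disjoint_range_of_add_le_ENat_card
    (s := (∅ : Set s)) (n := n + 1) (by simpa using Order.add_one_le_of_lt hlt)
  exact h (Subtype.val ∘ c) (fun i => (c i).2) (Subtype.val_injective.comp c.injective)

namespace Subgroup

variable {G : Type*} [Group G]

theorem disjoint_smul_of_inv_mul_notMem {C : Subgroup G} {x y : G} (h : x⁻¹ * y ∉ C) :
    Disjoint (x • (C : Set G)) (y • (C : Set G)) := by
  refine Set.disjoint_left.2 fun g hx hy => h ?_
  rw [mem_leftCoset_iff] at hx hy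
  simpa [mul_assoc] using mul_mem hx (inv_mem hy)

theorem mem_centralizer_singleton_comm_s5 {g k : G} :
    k ∈ centralizer {g} ↔ g ∈ centralizer {k} := by
  simp only [mem_centralizer_singleton_iff]
  exact eq_comm

theorem conj_eq_conj_iff_mul_inv_mem_centralizer {d e k : G} :
    d⁻¹ * k * d = e⁻¹ * k * e ↔ d * e⁻¹ ∈ centralizer {k} := by
  rw [mem_centralizer_singleton_iff]
  constructor <;> intro h
  · calc d * e⁻¹ * k = d * (e⁻¹ * k * e) * e⁻¹ := by group
      _ = k * (d * e⁻¹) := by rw [← h]; group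
  · calc d⁻¹ * k * d = d⁻¹ * (k * (d * e⁻¹)) * e := by group
      _ = e⁻¹ * k * e := by rw [← h]; group

theorem normalCore_eq_iInf_map_conj_inv (K : Subgroup G) :
    K.normalCore = ⨅ x : G, K.map (MulAut.conj x⁻¹).toMonoidHom := by
  rw [normalCore_eq_iInf_map_conj, ← (Equiv.inv G).iInf_comp]
  rfl

end Subgroup

section SubgroupCenter

variable {G : Type*} [Group G] {H : Subgroup G}

theorem subgroupCenter_le_centralizer_singleton {g : G} (hg : g ∈ H) :
    subgroupCenter H ≤ centralizer {g} :=
  inf_le_right.trans (centralizer_le (Set.singleton_subset_iff.2 hg))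

theorem le_centralizer_singleton_of_mem_subgroupCenter {z : G} (hz : z ∈ subgroupCenter H) :
    H ≤ centralizer {z} :=
  fun h hh => mem_centralizer_singleton_iff.2 (hz.2 h hh)

instance subgroupCenter_normal [H.Normal] : (subgroupCenter H).Normal :=
  inferInstanceAs (H ⊓ centralizer (H : Set G)).Normal

end SubgroupCenter

section Pattern

variable {G : Type*} [Group G]

theorem hasCosetTP2Pattern_zero : HasCosetTP2Pattern G 0 :=
  ⟨fun _ => Fin.elim0, fun _ => 1, fun _ i => i.elim0, fun _ f => (f 0).elim0⟩

theorem commute_inv_mul_prod_range {c b : ℕ → G}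
    (hcb : ∀ k l, k ≠ l → Commute (c k) (b l)) (hcc : ∀ k l, k ≠ l → Commute (c k) (c l))
    {l m : ℕ} (hlm : l < m) : Commute ((c l)⁻¹ * ((List.range m).map c).prod) (b l) := by
  induction m with
  | zero => omega
  | succ m ih =>
    rw [List.prod_range_succ]
    rcases Nat.lt_succ_iff_lt_or_eq.1 hlm with hlt | rfl
    · rw [← mul_assoc]
      exact (ih hlt).mul_left (hcb m l (by omega))
    · have hc : Commute ((List.range l).map c).prod (c l) :=
        Commute.list_prod_left _ _ fun x hx => by
          obtain ⟨k, hk, rfl⟩ := List.mem_map.1 hx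
          exact hcc k l (List.mem_range.1 hk).ne
      have hb : Commute ((List.range l).map c).prod (b l) :=
        Commute.list_prod_left _ _ fun x hx => by
          obtain ⟨k, hk, rfl⟩ := List.mem_map.1 hx
          exact hcb k l (List.mem_range.1 hk).ne
      rwa [hc.eq, inv_mul_cancel_left]

theorem hasCosetTP2Pattern_of_commute {n : ℕ} (a : ℕ → Fin n → G) (b : ℕ → G)
    (hrow : ∀ l (i j : Fin n), i < j → (a l i)⁻¹ * a l j ∉ centralizer {b l})
    (hab : ∀ k l, k ≠ l → ∀ i, Commute (a k i) (b l))
    (haa : ∀ k l, k ≠ l → ∀ i j, Commute (a k i) (a l j)) :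
    HasCosetTP2Pattern G n := by
  refine ⟨a, b, fun l i j hij => ?_, fun m f => ?_⟩
  · rcases hij.lt_or_gt with h | h
    · exact disjoint_smul_of_inv_mul_notMem (hrow l i j h)
    · exact (disjoint_smul_of_inv_mul_notMem (hrow l j i h)).symm
  · refine ⟨((List.range (m + 1)).map fun k => a k (f k)).prod, fun l hl => ?_⟩
    rw [mem_leftCoset_iff, SetLike.mem_coe, mem_centralizer_singleton_iff]
    exact (commute_inv_mul_prod_range (fun k l hkl => hab k l hkl (f k))
      (fun k l hkl => haa k l hkl (f k) (f l)) (Nat.lt_add_one_of_le hl)).eq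

end Pattern

section Witnesses

variable {G : Type*} [Group G] {H : Subgroup G} {n : ℕ}

namespace WitnessTriple

variable {S : Set G} {a : Fin (n + 1) → G} {b : G}

theorem le_centralizer_singleton (hw : WitnessTriple H n S a b) (hHS : (H : Set G) ⊆ S)
    (i : Fin (n + 1)) : H ≤ centralizer {a i} := fun h hh =>
  mem_centralizer_singleton_comm_s5.1 (hw.1 i h (hHS hh) (subgroupCenter_le_centralizer_singleton hh))

theorem subgroupCenter_le_centralizer_singleton (hw : WitnessTriple H n S a b)
    (hHS : (H : Set G) ⊆ S) : subgroupCenter H ≤ centralizer {b} := fun z hz =>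
  mem_centralizer_singleton_comm_s5.1
    (hw.2.1 z (hHS hz.1) (le_centralizer_singleton_of_mem_subgroupCenter hz))

end WitnessTriple

theorem exists_witnessTriple_union_finset (hsat : CentralizerSaturated G H)
    (hwit : ∀ F : Finset G, ∃ a b, WitnessTriple H n F a b) (T : Finset G) :
    ∃ a b, WitnessTriple H n ((H : Set G) ∪ T) a b := by
  refine hsat n _ ?_ fun F _ => hwit F
  refine (Cardinal.mk_union_le _ _).trans (Cardinal.add_le_of_le (le_max_right _ _) ?_ ?_)
  · exact le_max_left _ _
  · exact le_max_of_le_right (T.finite_toSet.lt_aleph0).le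

theorem hasCosetTP2Pattern_of_forall_witnessTriple (hsat : CentralizerSaturated G H)
    (hwit : ∀ F : Finset G, ∃ a b, WitnessTriple H n F a b) :
    HasCosetTP2Pattern G (n + 1) := by
  classical
  choose a b hw using exists_witnessTriple_union_finset hsat hwit
  let entries (T : Finset G) : Finset G := insert (b T) (Finset.univ.image (a T))
  let T (l : ℕ) : Finset G := (fun S => S ∪ entries S)^[l] ∅
  have hT : ∀ {k l}, k < l → ∀ g ∈ entries (T k), g ∈ (H : Set G) ∪ T l := by
    intro k l hkl g hg
    have hmono : Monotone T := monotone_nat_of_le_succ fun l => by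
      simp only [T, Function.iterate_succ_apply']
      exact Finset.subset_union_left
    refine Or.inr (hmono hkl ?_)
    simp only [T, Function.iterate_succ_apply']
    exact Finset.mem_union_right _ hg
  have hb : ∀ {k l}, k < l → b (T k) ∈ (H : Set G) ∪ T l :=
    fun hkl => hT hkl _ (Finset.mem_insert_self _ _)
  have ha : ∀ {k l}, k < l → ∀ i, a (T k) i ∈ (H : Set G) ∪ T l :=
    fun hkl i => hT hkl _ (Finset.mem_insert_of_mem (Finset.mem_image_of_mem _ (Finset.mem_univ i)))
  have hHS : ∀ l, (H : Set G) ⊆ (H : Set G) ∪ T l := fun _ => Set.subset_union_left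
  have haa : ∀ k l, l < k → ∀ i j, Commute (a (T k) i) (a (T l) j) := fun k l hlk i j =>
    mem_centralizer_singleton_iff.1 <|
      (hw _).1 i _ (ha hlk j) (inf_le_left.trans ((hw _).le_centralizer_singleton (hHS l) j))
  refine hasCosetTP2Pattern_of_commute (fun l => a (T l)) (fun l => b (T l))
    (fun l => (hw _).2.2) (fun k l hkl i => ?_) (fun k l hkl i j => ?_)
  · rcases hkl.lt_or_gt with hlt | hgt
    · exact Commute.symm <| mem_centralizer_singleton_iff.1 <|
        (hw _).2.1 _ (ha hlt i) ((hw _).le_centralizer_singleton (hHS k) i)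
    · exact mem_centralizer_singleton_iff.1 <|
        (hw _).1 i _ (hb hgt) ((hw _).subgroupCenter_le_centralizer_singleton (hHS l))
  · rcases hkl.lt_or_gt with hlt | hgt
    · exact (haa l k hlt j i).symm
    · exact haa k l hgt i j

theorem exists_finset_forall_not_witnessTriple (hTP : NoCosetTP2Pattern G)
    (hsat : CentralizerSaturated G H) :
    ∃ (n : ℕ) (F : Finset G), ∀ a b, ¬ WitnessTriple H n F a b := by
  obtain ⟨_ | n, hn⟩ := hTP
  · exact absurd hasCosetTP2Pattern_zero hn
  · by_contra! h
    exact hn (hasCosetTP2Pattern_of_forall_witnessTriple hsat (h n))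

theorem finite_and_ncard_conj_le_of_forall_not_witnessTriple {F : Set G}
    (hF : ∀ a b, ¬ WitnessTriple H n F a b) {A : Subgroup G}
    (hA : ∀ g ∈ F, subgroupCenter H ≤ centralizer {g} → A ≤ centralizer {g})
    {k : G} (hk : ∀ g ∈ F, H ≤ centralizer {g} → k ∈ centralizer {g}) :
    {x | ∃ a ∈ A, x = a⁻¹ * k * a}.Finite ∧ {x | ∃ a ∈ A, x = a⁻¹ * k * a}.ncard ≤ n := by
  refine Set.finite_and_ncard_le_of_forall_not_injective fun c hc hinj => ?_
  choose d hdA hcd using hc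
  refine hF (fun i => (d i)⁻¹) k
    ⟨fun i g hg hZg => inv_mem (hA g hg hZg (hdA i)), hk, fun i j hij hmem => hij.ne (hinj ?_)⟩
  rw [hcd, hcd, conj_eq_conj_iff_mul_inv_mem_centralizer]
  simpa using hmem

end Witnesses

theorem nilpotent_key_lemma {G : Type*} [Group G] (H : Subgroup G)
    (hTP : NoCosetTP2Pattern G) (hsat : CentralizerSaturated G H) :
    ∃ (m : ℕ) (F₁ F₂ : Finset G),
      (∀ g ∈ F₁, subgroupCenter H ≤ Subgroup.centralizer {g}) ∧
      (∀ g ∈ F₂, H ≤ Subgroup.centralizer {g}) ∧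
      ∃ (K A : Subgroup G),
        K = (⨅ g ∈ F₂, Subgroup.centralizer {g}) ∧
        A = K ⊓ (⨅ g ∈ F₁, Subgroup.centralizer {g}) ∧
        H ≤ K ∧ subgroupCenter H ≤ A ∧ A ≤ K ∧
        (∀ k ∈ K, ({x | ∃ a ∈ A, x = a⁻¹ * k * a}).Finite ∧
                  ({x | ∃ a ∈ A, x = a⁻¹ * k * a}).ncard ≤ m) ∧
        (H.Normal →
          ∃ (K' A' : Subgroup G),
            K' = (⨅ x : G, K.map (MulAut.conj x⁻¹).toMonoidHom) ∧
            A' = (⨅ x : G, A.map (MulAut.conj x⁻¹).toMonoidHom) ∧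
            K'.Normal ∧ A'.Normal ∧
            H ≤ K' ∧ subgroupCenter H ≤ A' ∧ A' ≤ K' ∧
            (∀ k ∈ K', ({x | ∃ a ∈ A', x = a⁻¹ * k * a}).Finite ∧
                       ({x | ∃ a ∈ A', x = a⁻¹ * k * a}).ncard ≤ m)) := by
  classical
  obtain ⟨n, F, hF⟩ := exists_finset_forall_not_witnessTriple hTP hsat
  set F₁ := F.filter fun g => subgroupCenter H ≤ centralizer {g}
  set F₂ := F.filter fun g => H ≤ centralizer {g}
  set K : Subgroup G := ⨅ g ∈ F₂, centralizer {g}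
  set A : Subgroup G := K ⊓ ⨅ g ∈ F₁, centralizer {g}
  have hF₁ : ∀ g ∈ F₁, subgroupCenter H ≤ centralizer {g} := fun g hg => (Finset.mem_filter.1 hg).2
  have hF₂ : ∀ g ∈ F₂, H ≤ centralizer {g} := fun g hg => (Finset.mem_filter.1 hg).2
  have hHK : H ≤ K := le_iInf₂ hF₂
  have hZA : subgroupCenter H ≤ A := le_inf (inf_le_left.trans hHK) (le_iInf₂ hF₁)
  have hK : ∀ g ∈ F₂, K ≤ centralizer {g} := fun g hg => iInf₂_le g hg
  have hA : ∀ g ∈ F₁, A ≤ centralizer {g} := fun g hg => inf_le_right.trans (iInf₂_le g hg)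
  have horbit : ∀ {A' K' : Subgroup G}, A' ≤ A → K' ≤ K → ∀ k ∈ K',
      {x | ∃ a ∈ A', x = a⁻¹ * k * a}.Finite ∧ {x | ∃ a ∈ A', x = a⁻¹ * k * a}.ncard ≤ n :=
    fun hA' hK' k hk => finite_and_ncard_conj_le_of_forall_not_witnessTriple hF
      (fun g hg hZg => hA'.trans (hA g (Finset.mem_filter.2 ⟨hg, hZg⟩)))
      (fun g hg hHg => hK g (Finset.mem_filter.2 ⟨hg, hHg⟩) (hK' hk))
  refine ⟨n, F₁, F₂, hF₁, hF₂, K, A, rfl, rfl, hHK, hZA, inf_le_left, horbit le_rfl le_rfl,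
    fun hN => ⟨K.normalCore, A.normalCore, K.normalCore_eq_iInf_map_conj_inv,
      A.normalCore_eq_iInf_map_conj_inv, inferInstance, inferInstance,
      normal_le_normalCore.2 hHK, normal_le_normalCore.2 hZA, normalCore_mono inf_le_left,
      horbit A.normalCore_le K.normalCore_le⟩⟩
end
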